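/- Let K > 0, C, A, B, a₁ ≠ 0, a₂, μ > 0 be real constants with A and B not both zero, set ε* := 2π e^C/(A² + B²), and let Φ : ℝ → ℝ be a twice continuously differentiable function satisfying Φ''(s) = ε* e^{-Φ(s)/K} for all s. Define a(t) := a₁ + a₂ t, ρ(t,x,y) := (1/a(t)²) e^{-Φ((Ax+By)/a(t))/K + C}, u(t,x,y) := (a'(t)/a(t))·(x,y), and φ(t,x,y) := Φ((Ax+By)/a(t)). Then at every point (t,x,y) with a(t) ≠ 0, these functions satisfy the 2-dimensional isothermal Navier–Stokes–Poisson equations: ∂ρ/∂t + ∇·(ρu) = 0, ρ(∂u/∂t + (u·∇)u) + K∇ρ = -ρ∇φ + μΔu, and Δφ = 2πρ, where ∇ and Δ act on the spatial variables (x,y). -/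

import Mathlib

/-!
The ansatz is self-similar: `ρ = a⁻² g(ξ)` with `ξ = (Ax + By)/a`, and `ξ` is transported by the
homologous flow `u = (a'/a)(x, y)`, so mass is conserved for every `a`. The acceleration of this
flow is `(a''/a)(x, y)`, which vanishes for affine `a`, and `u` is linear, so `Δu = 0`. The
Boltzmann form `ρ ∝ e^{-φ/K}` balances pressure against gravity, and since
`Δ = (A² + B²)/a² · d²/dξ²` on functions of `ξ`, the ODE for `Φ` is exactly the Poisson equation.
-/

open Real

theorem material_deriv_homologous_velocity {a : ℝ → ℝ} {t : ℝ}
    (ha : DifferentiableAt ℝ a t) (ha' : DifferentiableAt ℝ (deriv a) t) (hat : a t ≠ 0)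
    (z : ℝ) :
    deriv (fun t' => deriv a t' / a t' * z) t
        + deriv a t / a t * z * deriv (fun z' => deriv a t / a t * z') z
      = deriv (deriv a) t / a t * z := by
  have ht : HasDerivAt (fun t' => deriv a t' / a t' * z) _ t :=
    (ha'.hasDerivAt.div ha.hasDerivAt hat).mul_const z
  rw [ht.deriv, deriv_const_mul_field', deriv_id'']
  field_simp
  ring

theorem selfSimilar_density_continuity {g a : ℝ → ℝ} {t : ℝ} (A B x y : ℝ)
    (hg : DifferentiableAt ℝ g ((A * x + B * y) / a t)) (ha : DifferentiableAt ℝ a t)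
    (hat : a t ≠ 0) :
    deriv (fun t' => 1 / a t' ^ 2 * g ((A * x + B * y) / a t')) t
        + deriv (fun x' => 1 / a t ^ 2 * g ((A * x' + B * y) / a t) * (deriv a t / a t * x')) x
        + deriv (fun y' => 1 / a t ^ 2 * g ((A * x + B * y') / a t) * (deriv a t / a t * y')) y
      = 0 := by
  have ht : HasDerivAt (fun t' => 1 / a t' ^ 2 * g ((A * x + B * y) / a t')) _ t :=
    ((hasDerivAt_const t 1).div (ha.hasDerivAt.pow 2) (pow_ne_zero 2 hat)).mul
      (hg.hasDerivAt.comp t ((hasDerivAt_const t _).div ha.hasDerivAt hat))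
  have hx : HasDerivAt
      (fun x' => 1 / a t ^ 2 * g ((A * x' + B * y) / a t) * (deriv a t / a t * x')) _ x :=
    ((hg.hasDerivAt.comp x
      ((((hasDerivAt_id x).const_mul A).add_const (B * y)).div_const (a t))).const_mul _).mul
      ((hasDerivAt_id x).const_mul _)
  have hy : HasDerivAt
      (fun y' => 1 / a t ^ 2 * g ((A * x + B * y') / a t) * (deriv a t / a t * y')) _ y :=
    ((hg.hasDerivAt.comp y
      ((((hasDerivAt_id y).const_mul B).const_add (A * x)).div_const (a t))).const_mul _).mul
      ((hasDerivAt_id y).const_mul _)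
  rw [ht.deriv, hx.deriv, hy.deriv]
  simp only [Pi.div_apply, Pi.pow_apply, Function.comp_apply, id]
  field_simp
  ring

theorem mul_deriv_const_mul_exp_neg_div_add {ψ : ℝ → ℝ} {z : ℝ} (K c C : ℝ) (hK : K ≠ 0)
    (hψ : DifferentiableAt ℝ ψ z) :
    K * deriv (fun z' => c * exp (-ψ z' / K + C)) z = -(c * exp (-ψ z / K + C) * deriv ψ z) := by
  have h : HasDerivAt (fun z' => c * exp (-ψ z' / K + C)) _ z :=
    ((hψ.hasDerivAt.neg.div_const K).add_const C).exp.const_mul c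
  rw [h.deriv, Pi.neg_apply]
  field_simp

theorem deriv_deriv_comp_of_hasDerivAt_const {Φ f : ℝ → ℝ} {α : ℝ} (hΦ : ContDiff ℝ 2 Φ)
    (hf : ∀ z, HasDerivAt f α z) (z : ℝ) :
    deriv (fun z' => deriv (fun z'' => Φ (f z'')) z') z = deriv (deriv Φ) (f z) * α ^ 2 := by
  have hΦ' : Differentiable ℝ (deriv Φ) := hΦ.differentiable_deriv_two
  have h1 : deriv (fun z'' => Φ (f z'')) = fun z' => deriv Φ (f z') * α :=
    funext fun z' => ((hΦ.differentiable two_ne_zero _).hasDerivAt.comp z' (hf z')).deriv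
  have h2 : HasDerivAt (fun z' => deriv Φ (f z') * α) _ z :=
    ((hΦ' _).hasDerivAt.comp z (hf z)).mul_const α
  rw [h1, h2.deriv]
  ring

theorem navier_stokes_poisson_separable_solution_general
    (K C A B a₁ a₂ μ : ℝ) (hK : 0 < K)
    (hAB : ¬(A = 0 ∧ B = 0))
    (ε : ℝ) (hε : ε = 2 * Real.pi * Real.exp C / (A ^ 2 + B ^ 2))
    (Φ : ℝ → ℝ) (hΦ : ContDiff ℝ 2 Φ)
    (hODE : ∀ s : ℝ, deriv (deriv Φ) s = ε * Real.exp (-Φ s / K))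
    (a : ℝ → ℝ) (ha : a = fun t => a₁ + a₂ * t)
    (ρ : ℝ → ℝ → ℝ → ℝ)
    (hρ : ρ = fun t x y =>
      (1 / (a t) ^ 2) * Real.exp (-Φ ((A * x + B * y) / a t) / K + C))
    (u₁ u₂ : ℝ → ℝ → ℝ → ℝ)
    (hu₁ : u₁ = fun t x y => (deriv a t / a t) * x)
    (hu₂ : u₂ = fun t x y => (deriv a t / a t) * y)
    (φ : ℝ → ℝ → ℝ → ℝ)
    (hφ : φ = fun t x y => Φ ((A * x + B * y) / a t)) :
    ∀ t x y : ℝ, a t ≠ 0 →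
      -- continuity equation
      (deriv (fun t' => ρ t' x y) t
        + deriv (fun x' => ρ t x' y * u₁ t x' y) x
        + deriv (fun y' => ρ t x y' * u₂ t x y') y = 0)
      ∧
      -- x-momentum equation with viscosity
      (ρ t x y * (deriv (fun t' => u₁ t' x y) t
          + u₁ t x y * deriv (fun x' => u₁ t x' y) x
          + u₂ t x y * deriv (fun y' => u₁ t x y') y)
        + K * deriv (fun x' => ρ t x' y) x
        = -(ρ t x y * deriv (fun x' => φ t x' y) x)
          + μ * (deriv (fun x' => deriv (fun x'' => u₁ t x'' y) x') x
              + deriv (fun y' => deriv (fun y'' => u₁ t x y'') y') y))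
      ∧
      -- y-momentum equation with viscosity
      (ρ t x y * (deriv (fun t' => u₂ t' x y) t
          + u₁ t x y * deriv (fun x' => u₂ t x' y) x
          + u₂ t x y * deriv (fun y' => u₂ t x y') y)
        + K * deriv (fun y' => ρ t x y') y
        = -(ρ t x y * deriv (fun y' => φ t x y') y)
          + μ * (deriv (fun x' => deriv (fun x'' => u₂ t x'' y) x') x
              + deriv (fun y' => deriv (fun y'' => u₂ t x y'') y') y))
      ∧
      -- Poisson equation
      (deriv (fun x' => deriv (fun x'' => φ t x'' y) x') x
        + deriv (fun y' => deriv (fun y'' => φ t x y'') y') y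
        = 2 * Real.pi * ρ t x y) := by
  subst hε hρ hu₁ hu₂ hφ
  have hda : deriv a = fun _ => a₂ := by subst ha; funext t; simp
  have hdiff : Differentiable ℝ a := by subst ha; fun_prop
  have hΦd : Differentiable ℝ Φ := hΦ.differentiable two_ne_zero
  have hAB2 : A ^ 2 + B ^ 2 ≠ 0 := by
    simpa only [sq, ne_eq, mul_self_add_mul_self_eq_zero] using hAB
  intro t x y hat
  beta_reduce
  have hξx : ∀ x', HasDerivAt (fun x'' => (A * x'' + B * y) / a t) (A / a t) x' := fun x' => by
    simpa using (((hasDerivAt_id x').const_mul A).add_const (B * y)).div_const (a t)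
  have hξy : ∀ y', HasDerivAt (fun y'' => (A * x + B * y'') / a t) (B / a t) y' := fun y' => by
    simpa using (((hasDerivAt_id y').const_mul B).const_add (A * x)).div_const (a t)
  have hacc : ∀ z, deriv (fun t' => deriv a t' / a t' * z) t
      + deriv a t / a t * z * deriv (fun z' => deriv a t / a t * z') z = 0 := fun z => by
    rw [material_deriv_homologous_velocity (hdiff t) (by rw [hda]; fun_prop) hat, hda,
      deriv_const, zero_div, zero_mul]
  refine ⟨selfSimilar_density_continuity (g := fun s => rexp (-Φ s / K + C)) A B x y
    (by fun_prop) (hdiff t) hat, ?_, ?_, ?_⟩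
  · have hφx : DifferentiableAt ℝ (fun x' => Φ ((A * x' + B * y) / a t)) x := by fun_prop
    rw [hacc, mul_deriv_const_mul_exp_neg_div_add K _ C hK.ne' hφx]
    simp
  · have hφy : DifferentiableAt ℝ (fun y' => Φ ((A * x + B * y') / a t)) y := by fun_prop
    rw [deriv_const, mul_zero, add_zero, hacc,
      mul_deriv_const_mul_exp_neg_div_add K _ C hK.ne' hφy]
    simp
  · rw [deriv_deriv_comp_of_hasDerivAt_const hΦ hξx,
      deriv_deriv_comp_of_hasDerivAt_const hΦ hξy, hODE, exp_add]
    field_simp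

/-- The separable ansatz also solves the 2-dimensional
isothermal Navier–Stokes–Poisson equations with viscosity `μ > 0`:
continuity, both momentum components with the extra viscous term `μΔuᵢ`,
and the Poisson equation, wherever `a(t) ≠ 0`. -/
theorem navier_stokes_poisson_separable_solution
    (K C A B a₁ a₂ μ : ℝ) (hK : 0 < K) (ha₁ : a₁ ≠ 0) (hμ : 0 < μ)
    (hAB : ¬(A = 0 ∧ B = 0))
    (ε : ℝ) (hε : ε = 2 * Real.pi * Real.exp C / (A ^ 2 + B ^ 2))
    (Φ : ℝ → ℝ) (hΦ : ContDiff ℝ 2 Φ)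
    (hODE : ∀ s : ℝ, deriv (deriv Φ) s = ε * Real.exp (-Φ s / K))
    (a : ℝ → ℝ) (ha : a = fun t => a₁ + a₂ * t)
    (ρ : ℝ → ℝ → ℝ → ℝ)
    (hρ : ρ = fun t x y =>
      (1 / (a t) ^ 2) * Real.exp (-Φ ((A * x + B * y) / a t) / K + C))
    (u₁ u₂ : ℝ → ℝ → ℝ → ℝ)
    (hu₁ : u₁ = fun t x y => (deriv a t / a t) * x)
    (hu₂ : u₂ = fun t x y => (deriv a t / a t) * y)
    (φ : ℝ → ℝ → ℝ → ℝ)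
    (hφ : φ = fun t x y => Φ ((A * x + B * y) / a t)) :
    ∀ t x y : ℝ, a t ≠ 0 →
      -- continuity equation
      (deriv (fun t' => ρ t' x y) t
        + deriv (fun x' => ρ t x' y * u₁ t x' y) x
        + deriv (fun y' => ρ t x y' * u₂ t x y') y = 0)
      ∧
      -- x-momentum equation with viscosity
      (ρ t x y * (deriv (fun t' => u₁ t' x y) t
          + u₁ t x y * deriv (fun x' => u₁ t x' y) x
          + u₂ t x y * deriv (fun y' => u₁ t x y') y)
        + K * deriv (fun x' => ρ t x' y) x
        = -(ρ t x y * deriv (fun x' => φ t x' y) x)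
          + μ * (deriv (fun x' => deriv (fun x'' => u₁ t x'' y) x') x
              + deriv (fun y' => deriv (fun y'' => u₁ t x y'') y') y))
      ∧
      -- y-momentum equation with viscosity
      (ρ t x y * (deriv (fun t' => u₂ t' x y) t
          + u₁ t x y * deriv (fun x' => u₂ t x' y) x
          + u₂ t x y * deriv (fun y' => u₂ t x y') y)
        + K * deriv (fun y' => ρ t x y') y
        = -(ρ t x y * deriv (fun y' => φ t x y') y)
          + μ * (deriv (fun x' => deriv (fun x'' => u₂ t x'' y) x') x
              + deriv (fun y' => deriv (fun y'' => u₂ t x y'') y') y))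
      ∧
      -- Poisson equation
      (deriv (fun x' => deriv (fun x'' => φ t x'' y) x') x
        + deriv (fun y' => deriv (fun y'' => φ t x y'') y') y
        = 2 * Real.pi * ρ t x y) :=
  navier_stokes_poisson_separable_solution_general K C A B a₁ a₂ μ hK hAB ε hε Φ hΦ hODE a ha ρ hρ
    u₁ u₂ hu₁ hu₂ φ hφ
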